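/- arXiv:math/0210252 — 5 statements merged into one kernel-verified Lean document; each statement's English description precedes it below -/
import Mathlib

section
/- Let A be a 2×2 real matrix with det A = 1 and let u(θ) = (cos θ, sin θ). Then (1/(2π)) · ∫₀^{2π} ‖A·u(θ)‖^{-2} dθ = 1. -/
/-- The unit vector `(cos θ, sin θ)` in `ℝ²`. -/
noncomputable def unitVec (θ : ℝ) : Fin 2 → ℝ := ![Real.cos θ, Real.sin θ]

/-- Regard a pair of reals as a vector of the Euclidean plane (with the Euclidean norm). -/
noncomputable def toE2 (v : Fin 2 → ℝ) : EuclideanSpace ℝ (Fin 2) :=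
  (WithLp.equiv 2 (Fin 2 → ℝ)).symm v

open Complex in
lemma core_integral (a b c d : ℝ) (h : a * d - b * c = 1) :
    ∫ θ in (0:ℝ)..(2 * Real.pi),
      ((a * Real.cos θ + b * Real.sin θ) ^ 2 + (c * Real.cos θ + d * Real.sin θ) ^ 2)⁻¹
      = 2 * Real.pi := by
  set α : ℂ := ((a + d) / 2 : ℝ) + ((c - b) / 2 : ℝ) * I with hαdef
  set β : ℂ := ((a - d) / 2 : ℝ) + ((c + b) / 2 : ℝ) * I with hβdef
  have hαre : α.re = (a + d) / 2 := by simp [hαdef]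
  have hαim : α.im = (c - b) / 2 := by simp [hαdef]
  have hβre : β.re = (a - d) / 2 := by simp [hβdef]
  have hβim : β.im = (c + b) / 2 := by simp [hβdef]
  have hns : normSq α - normSq β = 1 := by
    simp only [normSq_apply, hαre, hαim, hβre, hβim]
    linear_combination h
  have hβsq : normSq β ≥ 0 := normSq_nonneg β
  have hαpos : 0 < normSq α := by linarith
  have hα0 : α ≠ 0 := by
    intro h0; rw [h0] at hαpos; simp at hαpos
  set γ : ℂ := β / α with hγdef
  have hβγ : β = γ * α := by rw [hγdef, div_mul_cancel₀ _ hα0]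
  have hγsq : normSq γ = normSq β / normSq α := by
    rw [hγdef, normSq_div]
  have hγlt : normSq γ < 1 := by
    rw [hγsq]; rw [div_lt_one hαpos]; linarith
  have hkey : normSq α * (1 - normSq γ) = 1 := by
    rw [hγsq]; field_simp; linarith
  set w : ℝ → ℂ := fun θ => 1 + γ * Complex.exp (((-2 * θ : ℝ) : ℂ) * I) with hwdef
  -- basic facts about w
  have hwre : ∀ θ : ℝ, 0 < (w θ).re := by
    intro θ
    have he : normSq (Complex.exp (((-2 * θ : ℝ) : ℂ) * I)) = 1 := by
      rw [normSq_eq_norm_sq, Complex.norm_exp_ofReal_mul_I]; norm_num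
    have hv : normSq (γ * Complex.exp (((-2 * θ : ℝ) : ℂ) * I)) < 1 := by
      rw [normSq_mul, he]; simpa using hγlt
    set v := γ * Complex.exp (((-2 * θ : ℝ) : ℂ) * I)
    have hv' : v.re * v.re + v.im * v.im < 1 := by rw [← normSq_apply]; exact hv
    have hvre : -1 < v.re := by nlinarith [mul_self_nonneg v.im]
    have hw1 : w θ = 1 + v := rfl
    rw [hw1]
    simp only [Complex.add_re, Complex.one_re]
    linarith
  have hwslit : ∀ θ : ℝ, w θ ∈ Complex.slitPlane := fun θ => Or.inl (hwre θ)
  have hwne : ∀ θ : ℝ, w θ ≠ 0 := by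
    intro θ h0
    have := hwre θ; rw [h0] at this; simp at this
  have hNpos : ∀ θ : ℝ, 0 < normSq (w θ) := fun θ => normSq_pos.mpr (hwne θ)
  -- the integrand equals (normSq α * normSq (w θ))⁻¹
  have hfw : ∀ θ : ℝ,
      (a * Real.cos θ + b * Real.sin θ) ^ 2 + (c * Real.cos θ + d * Real.sin θ) ^ 2
        = normSq α * normSq (w θ) := by
    intro θ
    have hz : α * Complex.exp ((θ : ℂ) * I) * w θ
        = α * Complex.exp ((θ : ℂ) * I) + β * Complex.exp (((-θ : ℝ) : ℂ) * I) := by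
      have hexp : Complex.exp ((θ : ℂ) * I) * Complex.exp (((-2 * θ : ℝ) : ℂ) * I)
          = Complex.exp (((-θ : ℝ) : ℂ) * I) := by
        rw [← Complex.exp_add]; congr 1; push_cast; ring
      rw [hwdef, hβγ, ← hexp]
      ring
    have hE2re : (Complex.exp (((-θ : ℝ) : ℂ) * I)).re = Real.cos θ := by
      rw [Complex.exp_ofReal_mul_I_re, Real.cos_neg]
    have hE2im : (Complex.exp (((-θ : ℝ) : ℂ) * I)).im = -Real.sin θ := by
      rw [Complex.exp_ofReal_mul_I_im, Real.sin_neg]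
    have hE1re : (Complex.exp ((θ : ℂ) * I)).re = Real.cos θ :=
      Complex.exp_ofReal_mul_I_re θ
    have hE1im : (Complex.exp ((θ : ℂ) * I)).im = Real.sin θ :=
      Complex.exp_ofReal_mul_I_im θ
    have hre : (α * Complex.exp ((θ : ℂ) * I) * w θ).re
        = a * Real.cos θ + b * Real.sin θ := by
      rw [hz]
      simp only [Complex.add_re, Complex.mul_re, Complex.mul_im,
        hαre, hαim, hβre, hβim, hE1re, hE1im, hE2re, hE2im]
      ring
    have him : (α * Complex.exp ((θ : ℂ) * I) * w θ).im
        = c * Real.cos θ + d * Real.sin θ := by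
      rw [hz]
      simp only [Complex.add_im, Complex.mul_re, Complex.mul_im,
        hαre, hαim, hβre, hβim, hE1re, hE1im, hE2re, hE2im]
      ring
    have hnormsq : normSq (α * Complex.exp ((θ : ℂ) * I) * w θ)
        = normSq α * normSq (w θ) := by
      rw [normSq_mul, normSq_mul, normSq_eq_norm_sq (Complex.exp _),
        Complex.norm_exp_ofReal_mul_I]
      ring
    rw [← hre, ← him, ← hnormsq, normSq_apply]; ring
  -- the antiderivative
  set F : ℝ → ℝ := fun θ => θ + (Complex.log (w θ)).im with hFdef
  have hderiv : ∀ θ : ℝ, HasDerivAt F ((normSq α * normSq (w θ))⁻¹) θ := by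
    intro θ
    have hinner : HasDerivAt (fun t : ℝ => (((-2 * t : ℝ) : ℂ) * I)) (-2 * I) θ := by
      have h1 : HasDerivAt (fun t : ℝ => (-2 : ℝ) * t) (-2) θ := by
        simpa using (hasDerivAt_id θ).const_mul (-2 : ℝ)
      simpa using (h1.ofReal_comp).mul_const I
    have hexp : HasDerivAt (fun t : ℝ => Complex.exp ((((-2 : ℝ) * t : ℝ) : ℂ) * I))
        (Complex.exp ((((-2 : ℝ) * θ : ℝ) : ℂ) * I) * (-2 * I)) θ := hinner.cexp
    have hw' : HasDerivAt w
        (γ * (Complex.exp ((((-2 : ℝ) * θ : ℝ) : ℂ) * I) * (-2 * I))) θ :=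
      (hexp.const_mul γ).const_add 1
    have hlog : HasDerivAt (fun t => Complex.log (w t))
        (γ * (Complex.exp ((((-2 : ℝ) * θ : ℝ) : ℂ) * I) * (-2 * I)) / w θ) θ :=
      hw'.clog_real (hwslit θ)
    have him : HasDerivAt (fun t : ℝ => (Complex.log (w t)).im)
        ((γ * (Complex.exp ((((-2 : ℝ) * θ : ℝ) : ℂ) * I) * (-2 * I)) / w θ).im) θ := by
      have := (Complex.imCLM.hasFDerivAt.comp_hasDerivAt θ hlog)
      exact this
    have hF : HasDerivAt F
        (1 + (γ * (Complex.exp ((((-2 : ℝ) * θ : ℝ) : ℂ) * I) * (-2 * I)) / w θ).im) θ :=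
      (hasDerivAt_id θ).add him
    convert hF using 1
    -- algebraic identity
    set e := Complex.exp ((((-2 : ℝ) * θ : ℝ) : ℂ) * I) with hedef
    have he : normSq e = 1 := by
      rw [hedef, normSq_eq_norm_sq, Complex.norm_exp_ofReal_mul_I]; norm_num
    set v := γ * e with hvdef
    have hvsq : normSq v = normSq γ := by rw [hvdef, normSq_mul, he, mul_one]
    have hwv : w θ = 1 + v := rfl
    set p := v.re with hp
    set q := v.im with hq
    have hm : p * p + q * q = normSq γ := by rw [← hvsq, normSq_apply]
    have hN : normSq (w θ) = 1 + 2 * p + normSq γ := by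
      rw [hwv, normSq_apply]
      simp only [Complex.add_re, Complex.add_im, Complex.one_re, Complex.one_im]
      rw [← hm]; ring
    have hd_im : (v * (-2 * I) / w θ).im = (-2 * p - 2 * normSq γ) / normSq (w θ) := by
      rw [Complex.div_im]
      have h1 : (v * (-2 * I)).im = -2 * p := by
        simp [Complex.mul_im, Complex.mul_re, Complex.I_re, Complex.I_im, hp]
        ring
      have h2 : (v * (-2 * I)).re = 2 * q := by
        simp [Complex.mul_re, Complex.mul_im, Complex.I_re, Complex.I_im, hq]
        ring
      have h3 : (w θ).re = 1 + p := by rw [hwv]; simp [hp]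
      have h4 : (w θ).im = q := by rw [hwv]; simp [hq]
      rw [h1, h2, h3, h4, ← hm]; ring
    have hγv : γ * (e * (-2 * I)) = v * (-2 * I) := by rw [hvdef]; ring
    rw [hγv, hd_im, hN]
    have hNne : (1 : ℝ) + 2 * p + normSq γ ≠ 0 := by
      have := hNpos θ; rw [hN] at this; linarith
    have hαne : normSq α ≠ 0 := ne_of_gt hαpos
    have hinv : (normSq α)⁻¹ = 1 - normSq γ := inv_eq_of_mul_eq_one_right hkey
    rw [mul_inv, hinv]
    field_simp
    ring
  -- integrability
  have hcont : Continuous fun θ : ℝ => (normSq α * normSq (w θ))⁻¹ := by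
    apply Continuous.inv₀
    · exact continuous_const.mul (Complex.continuous_normSq.comp
        (continuous_const.add (continuous_const.mul
          (Complex.continuous_exp.comp ((Complex.continuous_ofReal.comp
            (continuous_const.mul continuous_id)).mul continuous_const)))))
    · intro θ
      exact ne_of_gt (mul_pos hαpos (hNpos θ))
  have hint : IntervalIntegrable (fun θ : ℝ => (normSq α * normSq (w θ))⁻¹)
      MeasureTheory.volume 0 (2 * Real.pi) := hcont.intervalIntegrable 0 (2 * Real.pi)
  have hw2π : w (2 * Real.pi) = w 0 := by
    rw [hwdef]
    simp only []
    congr 2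
    have h42 : (((-2 * (2 * Real.pi) : ℝ)) : ℂ) * I
        = ((-2 : ℤ) : ℂ) * (2 * (Real.pi : ℂ) * I) := by
      push_cast; ring
    rw [h42, Complex.exp_int_mul_two_pi_mul_I]
    norm_num
  calc ∫ θ in (0:ℝ)..(2 * Real.pi),
        ((a * Real.cos θ + b * Real.sin θ) ^ 2 + (c * Real.cos θ + d * Real.sin θ) ^ 2)⁻¹
      = ∫ θ in (0:ℝ)..(2 * Real.pi), (normSq α * normSq (w θ))⁻¹ := by
        apply intervalIntegral.integral_congr
        intro θ _
        exact congrArg Inv.inv (hfw θ)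
    _ = F (2 * Real.pi) - F 0 := by
        apply intervalIntegral.integral_eq_sub_of_hasDerivAt
        · intro θ _; exact hderiv θ
        · exact hint
    _ = 2 * Real.pi := by rw [hFdef]; simp only []; rw [hw2π]; ring

/-- For a 2×2 real matrix `A` with `det A = 1`,
`(1/(2π)) ∫₀^{2π} ‖A·u(θ)‖⁻² dθ = 1`, where `u(θ) = (cos θ, sin θ)`. -/
theorem average_inverse_square_norm (A : Matrix (Fin 2) (Fin 2) ℝ) (hA : A.det = 1) :
    (1 / (2 * Real.pi)) *
      ∫ θ in (0:ℝ)..(2 * Real.pi), ‖toE2 (A.mulVec (unitVec θ))‖ ^ (-2 : ℤ) = 1 := by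
  have hdet : A 0 0 * A 1 1 - A 0 1 * A 1 0 = 1 := by
    rw [← Matrix.det_fin_two]; exact hA
  have hnorm : ∀ θ : ℝ, ‖toE2 (A.mulVec (unitVec θ))‖ ^ (-2 : ℤ)
      = ((A 0 0 * Real.cos θ + A 0 1 * Real.sin θ) ^ 2
          + (A 1 0 * Real.cos θ + A 1 1 * Real.sin θ) ^ 2)⁻¹ := by
    intro θ
    have hv0 : A.mulVec (unitVec θ) 0 = A 0 0 * Real.cos θ + A 0 1 * Real.sin θ := by
      simp [Matrix.mulVec, dotProduct, unitVec, Fin.sum_univ_two, Matrix.vecHead, Matrix.vecTail]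
    have hv1 : A.mulVec (unitVec θ) 1 = A 1 0 * Real.cos θ + A 1 1 * Real.sin θ := by
      simp [Matrix.mulVec, dotProduct, unitVec, Fin.sum_univ_two, Matrix.vecHead, Matrix.vecTail]
    have hE : ‖toE2 (A.mulVec (unitVec θ))‖
        = Real.sqrt ((A 0 0 * Real.cos θ + A 0 1 * Real.sin θ) ^ 2
          + (A 1 0 * Real.cos θ + A 1 1 * Real.sin θ) ^ 2) := by
      rw [EuclideanSpace.norm_eq]
      congr 1
      rw [Fin.sum_univ_two]
      have h0 : toE2 (A.mulVec (unitVec θ)) 0 = A.mulVec (unitVec θ) 0 := rfl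
      have h1 : toE2 (A.mulVec (unitVec θ)) 1 = A.mulVec (unitVec θ) 1 := rfl
      rw [h0, h1, hv0, hv1]
      simp [Real.norm_eq_abs, sq_abs]
    rw [hE, zpow_neg, zpow_two, Real.mul_self_sqrt (by positivity)]
  rw [intervalIntegral.integral_congr (fun θ _ => hnorm θ),
    core_integral _ _ _ _ hdet]
  have hpi : Real.pi ≠ 0 := Real.pi_ne_zero
  field_simp
end

section
/- Let A be a 2×2 real matrix with det A = 1 and let u(θ) = (cos θ, sin θ). Then ∫₀^{2π} log ‖A·u(θ)‖ dθ ≥ 0. Moreover, if A is not orthogonal (i.e. Aᵀ·A ≠ 1, equivalently ‖A·u(θ)‖ is not identically 1), then the inequality is strict: ∫₀^{2π} log ‖A·u(θ)‖ dθ > 0. -/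
/-!
For `v = u(θ + π/2)` the vectors `u = u(θ)`, `v` form a positive orthonormal basis, so Lagrange's
identity gives `‖Au‖² ‖Av‖² = (det A)² + ⟪Au, Av⟫²`. Hence `f θ = log ‖A u(θ)‖` satisfies
`f θ + f (θ + π/2) = ½ log (1 + (c θ)²)` with `c θ = ⟪Au, Av⟫`, and averaging this over a period
gives `∫ f = ¼ ∫ log (1 + c²) ≥ 0`. With `G = AᵀA` one has
`c θ = ½ (G₁₁ - G₀₀) sin 2θ + G₀₁ cos 2θ`, so `c` vanishes identically only when `G` is a
multiple of the identity, and `det G = 1` then forces `G = 1`.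
-/

open Real Set Matrix intervalIntegral

theorem intervalIntegral_pos_of_continuous_of_nonneg {f : ℝ → ℝ} {a b c : ℝ}
    (hf : Continuous f) (hf_nonneg : 0 ≤ f) (hc : c ∈ Ioo a b) (hfc : f c ≠ 0) :
    0 < ∫ x in a..b, f x := by
  rw [integral_pos_iff_support_of_nonneg_ae (.of_forall hf_nonneg) (hf.intervalIntegrable a b)]
  refine ⟨hc.1.trans hc.2, lt_of_lt_of_le ?_ (MeasureTheory.measure_mono
    (inter_subset_inter_right _ Ioo_subset_Ioc_self))⟩
  exact (hf.isOpen_support.inter isOpen_Ioo).measure_pos _ ⟨c, hfc, hc⟩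

theorem Function.Periodic.intervalIntegral_comp_add_right {f : ℝ → ℝ} {T : ℝ}
    (hf : Function.Periodic f T) (s : ℝ) :
    ∫ x in (0 : ℝ)..T, f (x + s) = ∫ x in (0 : ℝ)..T, f x := by
  simpa [integral_comp_add_right, add_comm] using hf.intervalIntegral_add_eq s 0

theorem dotProduct_self_mul_dotProduct_self (v w : Fin 2 → ℝ) :
    (v ⬝ᵥ v) * (w ⬝ᵥ w) = (v ⬝ᵥ w) ^ 2 + (Matrix.of ![v, w]).det ^ 2 := by
  simp [dotProduct, Fin.sum_univ_two, det_fin_two]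
  ring

theorem det_of_mulVec (A : Matrix (Fin 2) (Fin 2) ℝ) (v w : Fin 2 → ℝ) :
    (Matrix.of ![A *ᵥ v, A *ᵥ w]).det = A.det * (Matrix.of ![v, w]).det := by
  simp [det_fin_two]
  ring

theorem norm_toE2_sq (v : Fin 2 → ℝ) : ‖toE2 v‖ ^ 2 = v ⬝ᵥ v := by
  rw [toE2, EuclideanSpace.norm_sq_eq]
  simp [dotProduct, Fin.sum_univ_two, sq]

@[fun_prop]
theorem continuous_unitVec : Continuous unitVec := by
  unfold unitVec
  fun_prop

theorem unitVec_add_two_pi (θ : ℝ) : unitVec (θ + 2 * π) = unitVec θ := by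
  simp [unitVec]

theorem unitVec_add_pi_div_two (θ : ℝ) : unitVec (θ + π / 2) = ![-sin θ, cos θ] := by
  simp [unitVec, cos_add_pi_div_two, sin_add_pi_div_two]

theorem det_unitVec_unitVec_add_pi_div_two (θ : ℝ) :
    (Matrix.of ![unitVec θ, unitVec (θ + π / 2)]).det = 1 := by
  rw [unitVec_add_pi_div_two]
  simpa [det_fin_two, unitVec, sq] using cos_sq_add_sin_sq θ

noncomputable def logStretch (A : Matrix (Fin 2) (Fin 2) ℝ) (θ : ℝ) : ℝ :=
  log ‖toE2 (A *ᵥ unitVec θ)‖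

section

variable (A : Matrix (Fin 2) (Fin 2) ℝ)

theorem norm_sq_mul_norm_sq_mulVec_unitVec (θ : ℝ) :
    ‖toE2 (A *ᵥ unitVec θ)‖ ^ 2 * ‖toE2 (A *ᵥ unitVec (θ + π / 2))‖ ^ 2 =
      A.det ^ 2 + ((A *ᵥ unitVec θ) ⬝ᵥ (A *ᵥ unitVec (θ + π / 2))) ^ 2 := by
  rw [norm_toE2_sq, norm_toE2_sq, dotProduct_self_mul_dotProduct_self, det_of_mulVec,
    det_unitVec_unitVec_add_pi_div_two, mul_one, add_comm]

theorem norm_mulVec_unitVec_ne_zero (hA : A.det ≠ 0) (θ : ℝ) :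
    ‖toE2 (A *ᵥ unitVec θ)‖ ≠ 0 := by
  have hpos : 0 < A.det ^ 2 + ((A *ᵥ unitVec θ) ⬝ᵥ (A *ᵥ unitVec (θ + π / 2))) ^ 2 := by
    positivity
  rw [← norm_sq_mul_norm_sq_mulVec_unitVec] at hpos
  exact (pow_ne_zero_iff two_ne_zero).mp (left_ne_zero_of_mul hpos.ne')

theorem continuous_logStretch (hA : A.det ≠ 0) : Continuous (logStretch A) :=
  (((PiLp.continuous_toLp 2 _).comp (by fun_prop)).norm).log (norm_mulVec_unitVec_ne_zero A hA)

theorem periodic_logStretch : Function.Periodic (logStretch A) (2 * π) :=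
  fun θ => by rw [logStretch, logStretch, unitVec_add_two_pi]

theorem logStretch_add_logStretch_add_pi_div_two (hA : A.det ≠ 0) (θ : ℝ) :
    logStretch A θ + logStretch A (θ + π / 2) =
      log (A.det ^ 2 + ((A *ᵥ unitVec θ) ⬝ᵥ (A *ᵥ unitVec (θ + π / 2))) ^ 2) / 2 := by
  rw [← norm_sq_mul_norm_sq_mulVec_unitVec,
    log_mul (pow_ne_zero 2 (norm_mulVec_unitVec_ne_zero A hA _))
      (pow_ne_zero 2 (norm_mulVec_unitVec_ne_zero A hA _)),
    log_pow, log_pow, logStretch, logStretch]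
  push_cast
  ring

theorem integral_logStretch (hA : A.det ≠ 0) :
    ∫ θ in (0)..(2 * π), logStretch A θ =
      (∫ θ in (0)..(2 * π), log (A.det ^ 2 +
        ((A *ᵥ unitVec θ) ⬝ᵥ (A *ᵥ unitVec (θ + π / 2))) ^ 2)) / 4 := by
  have hcont := continuous_logStretch A hA
  calc ∫ θ in (0)..(2 * π), logStretch A θ
      = ((∫ θ in (0)..(2 * π), logStretch A θ) +
          ∫ θ in (0)..(2 * π), logStretch A (θ + π / 2)) / 2 := by
        rw [(periodic_logStretch A).intervalIntegral_comp_add_right]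
        ring
    _ = (∫ θ in (0)..(2 * π), (logStretch A θ + logStretch A (θ + π / 2))) / 2 := by
        rw [integral_add (hcont.intervalIntegrable _ _)
          ((show Continuous fun θ ↦ logStretch A (θ + π / 2) by fun_prop).intervalIntegrable _ _)]
    _ = _ := by
        simp_rw [logStretch_add_logStretch_add_pi_div_two A hA, intervalIntegral.integral_div]
        ring

theorem dotProduct_mulVec_unitVec_mulVec_unitVec_add_pi_div_two (θ : ℝ) :
    (A *ᵥ unitVec θ) ⬝ᵥ (A *ᵥ unitVec (θ + π / 2)) =
      ((Aᵀ * A) 1 1 - (Aᵀ * A) 0 0) * sin (2 * θ) / 2 + (Aᵀ * A) 0 1 * cos (2 * θ) := by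
  rw [unitVec_add_pi_div_two, sin_two_mul, cos_two_mul]
  simp [unitVec, mulVec, dotProduct, mul_apply, Fin.sum_univ_two]
  linear_combination -(A 0 0 * A 0 1 + A 1 0 * A 1 1) * sin_sq_add_cos_sq θ

theorem transpose_mul_self_eq_one_of_det_sq (hA : A.det ^ 2 = 1) (h01 : (Aᵀ * A) 0 1 = 0)
    (hdiag : (Aᵀ * A) 0 0 = (Aᵀ * A) 1 1) : Aᵀ * A = 1 := by
  set G := Aᵀ * A
  have h10 : G 1 0 = 0 := by
    rw [← h01]
    simp [G, mul_apply, Fin.sum_univ_two, mul_comm]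
  have hdet : G 0 0 * G 1 1 - G 0 1 * G 1 0 = 1 := by
    rw [← det_fin_two, det_mul, det_transpose, ← sq, hA]
  have hnonneg : 0 ≤ G 0 0 := by
    simp only [G, mul_apply, Fin.sum_univ_two, transpose_apply]
    exact add_nonneg (mul_self_nonneg _) (mul_self_nonneg _)
  have h00 : G 0 0 = 1 := by
    rw [h01, ← hdiag] at hdet
    nlinarith
  ext i j
  fin_cases i <;> fin_cases j <;> simp [h00, h01, h10, ← hdiag]

theorem exists_dotProduct_mulVec_unitVec_ne_zero (hA : A.det ^ 2 = 1) (hA' : Aᵀ * A ≠ 1) :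
    ∃ θ ∈ Ioo 0 (2 * π), (A *ᵥ unitVec θ) ⬝ᵥ (A *ᵥ unitVec (θ + π / 2)) ≠ 0 := by
  by_contra! h
  have hπ := pi_pos
  refine hA' (transpose_mul_self_eq_one_of_det_sq A hA ?_ ?_)
  · have h_pi_div_two := h (π / 2) ⟨by positivity, by linarith⟩
    rw [dotProduct_mulVec_unitVec_mulVec_unitVec_add_pi_div_two,
      mul_div_cancel₀ _ two_ne_zero] at h_pi_div_two
    simpa using h_pi_div_two
  · have h_pi_div_four := h (π / 4) ⟨by positivity, by linarith⟩
    rw [dotProduct_mulVec_unitVec_mulVec_unitVec_add_pi_div_two,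
      show 2 * (π / 4) = π / 2 by ring] at h_pi_div_four
    simp only [sin_pi_div_two, cos_pi_div_two, mul_one, mul_zero, add_zero] at h_pi_div_four
    linarith

end

/-- For a 2×2 real matrix `A` with `det A = 1`, `∫₀^{2π} log ‖A·u(θ)‖ dθ ≥ 0`;
moreover if `A` is not orthogonal (`Aᵀ·A ≠ 1`) then the inequality is strict. -/
theorem log_norm_circle_integral_nonneg (A : Matrix (Fin 2) (Fin 2) ℝ) (hA : A.det = 1) :
    (0 ≤ ∫ θ in (0:ℝ)..(2 * Real.pi), Real.log ‖toE2 (A.mulVec (unitVec θ))‖) ∧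
    (A.transpose * A ≠ 1 →
      0 < ∫ θ in (0:ℝ)..(2 * Real.pi), Real.log ‖toE2 (A.mulVec (unitVec θ))‖) := by
  have h := integral_logStretch A (by simp [hA])
  simp only [logStretch, hA, one_pow] at h
  rw [h]
  have hnonneg (c : ℝ) : 0 ≤ log (1 + c ^ 2) := log_nonneg (le_add_of_nonneg_right (sq_nonneg c))
  refine ⟨div_nonneg (integral_nonneg two_pi_pos.le fun θ _ ↦ hnonneg _) zero_le_four,
    fun hA' ↦ div_pos ?_ four_pos⟩
  obtain ⟨θ, hθ, hc⟩ := exists_dotProduct_mulVec_unitVec_ne_zero A (by simp [hA]) hA'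
  have hcont : Continuous fun θ ↦
      log (1 + ((A *ᵥ unitVec θ) ⬝ᵥ (A *ᵥ unitVec (θ + π / 2))) ^ 2) :=
    Continuous.log (by fun_prop) fun θ ↦ by positivity
  exact intervalIntegral_pos_of_continuous_of_nonneg hcont (fun θ ↦ hnonneg _) hθ
    (log_pos (lt_add_of_pos_right 1 (by positivity))).ne'
end

section
/- Let A be a 2×2 real matrix with det A = 1, let ‖A‖_op denote its Euclidean operator norm, and let u(θ) = (cos θ, sin θ). Then (1/(2π)) · ∫₀^{2π} log ‖A·u(θ)‖ dθ = log( (‖A‖_op + 1/‖A‖_op) / 2 ). -/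
/-- The operator norm of a 2×2 real matrix acting on `ℝ²` with the Euclidean norm. -/
noncomputable def opNormR (A : Matrix (Fin 2) (Fin 2) ℝ) : ℝ :=
  ‖Matrix.toEuclideanCLM (𝕜 := ℝ) A‖


noncomputable def Complex.abs : AbsoluteValue ℂ ℝ := NormedField.toAbsoluteValue ℂ

lemma Complex.norm_eq_abs (z : ℂ) : ‖z‖ = Complex.abs z := rfl

lemma Complex.abs_exp (z : ℂ) : Complex.abs (Complex.exp z) = Real.exp z.re := Complex.norm_exp z

lemma Complex.abs_re_le_abs (z : ℂ) : |z.re| ≤ Complex.abs z := Complex.abs_re_le_norm z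

lemma Complex.abs_natCast (n : ℕ) : Complex.abs (n : ℂ) = n := Complex.norm_natCast n

lemma Complex.abs_ofReal (r : ℝ) : Complex.abs (r : ℂ) = |r| := Complex.norm_real r

lemma Complex.continuous_abs : Continuous Complex.abs := continuous_norm

lemma Complex.sq_abs (z : ℂ) : Complex.abs z ^ 2 = Complex.normSq z := Complex.sq_norm z

lemma Complex.abs_apply (z : ℂ) : Complex.abs z = Real.sqrt (Complex.normSq z) := Complex.norm_def z

lemma Complex.abs_mul_cos_arg (x : ℂ) : Complex.abs x * Real.cos (Complex.arg x) = x.re :=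
  Complex.norm_mul_cos_arg x

lemma Complex.abs_mul_sin_arg (x : ℂ) : Complex.abs x * Real.sin (Complex.arg x) = x.im :=
  Complex.norm_mul_sin_arg x

lemma Complex.abs_mul_exp_arg_mul_I (x : ℂ) :
    ((Complex.abs x : ℝ) : ℂ) * Complex.exp (Complex.arg x * Complex.I) = x :=
  Complex.norm_mul_exp_arg_mul_I x

section Aux

open Complex intervalIntegral MeasureTheory

lemma contF (c : ℂ) : Continuous fun θ : ℝ => 1 + c * Complex.exp (θ * Complex.I) := by
  continuity

lemma re_pos (c : ℂ) (hc : Complex.abs c < 1) (θ : ℝ) :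
    0 < (1 + c * Complex.exp (θ * Complex.I)).re := by
  have h1 : Complex.abs (c * Complex.exp (θ * Complex.I)) = Complex.abs c := by
    simp [Complex.abs_exp]
  have h2 := Complex.abs_re_le_abs (c * Complex.exp (θ * Complex.I))
  rw [h1] at h2
  have := abs_le.mp h2
  simp only [Complex.add_re, Complex.one_re]
  linarith [this.1]

lemma integral_exp_n (n : ℕ) (hn : 1 ≤ n) :
    ∫ θ : ℝ in (0:ℝ)..(2*Real.pi), Complex.exp (θ * Complex.I) ^ n = 0 := by
  have h : ∀ θ : ℝ, Complex.exp (θ * Complex.I) ^ n = Complex.exp ((n * Complex.I) * θ) := by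
    intro θ
    rw [← Complex.exp_nat_mul]
    ring_nf
  simp_rw [h]
  have hne : (n : ℂ) * Complex.I ≠ 0 := by
    simp [Complex.I_ne_zero]
    omega
  rw [integral_exp_mul_complex hne]
  have h1 : Complex.exp ((n : ℂ) * Complex.I * ((2 * Real.pi : ℝ) : ℂ)) = 1 := by
    have := Complex.exp_nat_mul_two_pi_mul_I n
    rw [← this]
    push_cast
    ring_nf
  rw [h1]
  simp

lemma integral_log_abs_one_add (c : ℂ) (hc : Complex.abs c < 1) :
    ∫ θ in (0:ℝ)..(2*Real.pi), Real.log (Complex.abs (1 + c * Complex.exp (θ * Complex.I))) = 0 := by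
  set g : ℝ → ℂ := fun θ => Complex.log (1 + c * Complex.exp (θ * Complex.I)) with hg
  have hgc : Continuous g := by
    refine (contF c).clog fun θ => ?_
    exact Complex.mem_slitPlane_iff.mpr (Or.inl (re_pos c hc θ))
  have hF : ∀ θ : ℝ, HasSum
      (fun n : ℕ => (-1)^(n+1) * (c * Complex.exp (θ*Complex.I))^n / n) (g θ) := by
    intro θ
    have hnorm : ‖c * Complex.exp (θ*Complex.I)‖ < 1 := by
      simp only [norm_mul, Complex.norm_eq_abs, Complex.abs_exp]
      simpa using hc
    exact Complex.hasSum_taylorSeries_log hnorm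
  have hsum := intervalIntegral.hasSum_integral_of_dominated_convergence
    (F := fun (n : ℕ) (θ : ℝ) => (-1)^(n+1) * (c * Complex.exp (θ*Complex.I))^n / n)
    (bound := fun n _ => Complex.abs c ^ n / n)
    (μ := MeasureTheory.volume) (a := 0) (b := 2*Real.pi) (f := g)
    (fun n => (Continuous.aestronglyMeasurable (by continuity)))
    (fun n => ae_of_all _ fun t _ => by
      simp only [norm_div, norm_mul, norm_pow, norm_neg, norm_one, one_pow, one_mul,
        Complex.norm_eq_abs, Complex.abs_exp, Complex.norm_natCast]
      have h0 : ((t:ℂ)*Complex.I).re = 0 := by simp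
      rw [h0]
      simp [Complex.abs_natCast])
    (ae_of_all _ fun t _ => by
      refine Summable.of_nonneg_of_le (fun n => div_nonneg (pow_nonneg (Complex.abs.nonneg c) n) (Nat.cast_nonneg n)) (fun n => ?_)
        (summable_geometric_of_lt_one (Complex.abs.nonneg c) hc)
      rcases Nat.eq_zero_or_pos n with rfl | hn
      · simp
      · exact div_le_self (by positivity) (by exact_mod_cast hn))
    (intervalIntegrable_const)
    (ae_of_all _ fun t _ => hF t)
  have hzero : ∀ n : ℕ,
      (∫ θ in (0:ℝ)..(2*Real.pi), (-1:ℂ)^(n+1) * (c * Complex.exp (θ*Complex.I))^n / n) = 0 := by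
    intro n
    rcases Nat.eq_zero_or_pos n with rfl | hn
    · simp
    · have he : ∀ θ:ℝ, (-1:ℂ)^(n+1) * (c * Complex.exp (θ*Complex.I))^n / n
          = ((-1)^(n+1) * c^n / n) * Complex.exp (θ*Complex.I)^n := by intro θ; ring
      simp_rw [he]
      rw [intervalIntegral.integral_const_mul, integral_exp_n n hn, mul_zero]
  simp only [hzero] at hsum
  have hint : (∫ θ in (0:ℝ)..(2*Real.pi), g θ) = 0 := (hasSum_zero.unique hsum).symm
  have hre : ∀ θ:ℝ, Real.log (Complex.abs (1 + c * Complex.exp (θ * Complex.I))) =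
      Complex.reCLM (g θ) := fun θ => (Complex.log_re _).symm
  simp_rw [hre]
  rw [Complex.reCLM.intervalIntegral_comp_comm (hgc.intervalIntegrable _ _), hint]
  simp

lemma abs_add_pos (a : ℝ) (b : ℂ) (ha : 0 < a) (hba : Complex.abs b < a) (θ : ℝ) :
    0 < Complex.abs ((a:ℂ) + b * Complex.exp (θ * Complex.I)) := by
  have h1 : Complex.abs ((a:ℂ)) ≤ Complex.abs ((a:ℂ) + b * Complex.exp (θ * Complex.I))
      + Complex.abs (b * Complex.exp (θ * Complex.I)) := by
    calc Complex.abs ((a:ℂ)) = Complex.abs (((a:ℂ) + b * Complex.exp (θ * Complex.I))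
        + (-(b * Complex.exp (θ * Complex.I)))) := by ring_nf
    _ ≤ Complex.abs ((a:ℂ) + b * Complex.exp (θ * Complex.I))
        + Complex.abs (-(b * Complex.exp (θ * Complex.I))) := Complex.abs.add_le _ _
    _ = _ := by rw [AbsoluteValue.map_neg]
  have h2 : Complex.abs (b * Complex.exp (θ * Complex.I)) = Complex.abs b := by
    simp [Complex.abs_exp]
  rw [h2] at h1
  rw [Complex.abs_ofReal, abs_of_pos ha] at h1
  linarith

lemma cont_logabs (a : ℝ) (b : ℂ) (ha : 0 < a) (hba : Complex.abs b < a) :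
    Continuous fun θ : ℝ => Real.log (Complex.abs ((a:ℂ) + b * Complex.exp (θ * Complex.I))) := by
  have h1 : Continuous fun θ : ℝ => Complex.abs ((a:ℂ) + b * Complex.exp (θ * Complex.I)) := by
    apply Complex.continuous_abs.comp
    continuity
  exact h1.log fun θ => ne_of_gt (abs_add_pos a b ha hba θ)

lemma periodic_logabs (a : ℝ) (b : ℂ) :
    Function.Periodic
      (fun θ : ℝ => Real.log (Complex.abs ((a:ℂ) + b * Complex.exp (θ * Complex.I)))) (2*Real.pi) := by
  intro θ
  have : Complex.exp ((↑(θ + 2*Real.pi)) * Complex.I) = Complex.exp (θ * Complex.I) := by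
    push_cast
    rw [add_mul, Complex.exp_add]
    simp [Complex.exp_two_pi_mul_I]
  simp only [this]

lemma integral_log_abs_add (a : ℝ) (b : ℂ) (ha : 0 < a) (hba : Complex.abs b < a) :
    ∫ θ in (0:ℝ)..(2*Real.pi), Real.log (Complex.abs ((a:ℂ) + b * Complex.exp (θ * Complex.I)))
      = 2 * Real.pi * Real.log a := by
  have hc : Complex.abs (b / a) < 1 := by
    rw [map_div₀, Complex.abs_ofReal, abs_of_pos ha, div_lt_one ha]; exact hba
  have key : ∀ θ : ℝ, Real.log (Complex.abs ((a:ℂ) + b * Complex.exp (θ * Complex.I)))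
      = Real.log a + Real.log (Complex.abs (1 + (b/(a:ℂ)) * Complex.exp (θ * Complex.I))) := by
    intro θ
    have hsplit : (a:ℂ) + b * Complex.exp (θ*Complex.I)
        = (a:ℂ) * (1 + (b/(a:ℂ)) * Complex.exp (θ*Complex.I)) := by
      have : (a:ℂ) ≠ 0 := by exact_mod_cast ne_of_gt ha
      field_simp
    have hne : Complex.abs (1 + (b/(a:ℂ)) * Complex.exp (θ*Complex.I)) ≠ 0 := by
      have := re_pos (b/(a:ℂ)) hc θ
      intro h
      rw [Complex.abs.eq_zero] at h
      rw [h] at this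
      simp at this
    rw [hsplit, map_mul, Complex.abs_ofReal, abs_of_pos ha, Real.log_mul (ne_of_gt ha) hne]
  have hcont : Continuous fun θ:ℝ =>
      Real.log (Complex.abs (1 + (b/(a:ℂ)) * Complex.exp (θ * Complex.I))) := by
    have h1 : Continuous fun θ:ℝ => Complex.abs (1 + (b/(a:ℂ)) * Complex.exp (θ * Complex.I)) :=
      Complex.continuous_abs.comp (by continuity)
    refine h1.log fun θ => fun h => ?_
    have h2 := re_pos (b/(a:ℂ)) hc θ
    rw [Complex.abs.eq_zero] at h
    rw [h] at h2
    simp at h2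
  simp_rw [key]
  rw [intervalIntegral.integral_add (intervalIntegrable_const)
    (hcont.intervalIntegrable _ _), integral_log_abs_one_add _ hc, add_zero,
    intervalIntegral.integral_const]
  simp [smul_eq_mul]

lemma integral_double (a : ℝ) (b : ℂ) (ha : 0 < a) (hba : Complex.abs b < a) :
    ∫ θ in (0:ℝ)..(2*Real.pi),
        Real.log (Complex.abs ((a:ℂ) + b * Complex.exp ((2*θ : ℝ) * Complex.I)))
      = 2 * Real.pi * Real.log a := by
  set f := fun θ:ℝ => Real.log (Complex.abs ((a:ℂ) + b * Complex.exp ((θ:ℝ) * Complex.I))) with hf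
  have hint : ∀ t₁ t₂ : ℝ, IntervalIntegrable f MeasureTheory.volume t₁ t₂ :=
    fun t₁ t₂ => (cont_logabs a b ha hba).intervalIntegrable _ _
  have h0 : (∫ θ in (0:ℝ)..(2*Real.pi),
      Real.log (Complex.abs ((a:ℂ) + b * Complex.exp ((2*θ : ℝ) * Complex.I))))
      = ∫ θ in (0:ℝ)..(2*Real.pi), f (2*θ) := rfl
  rw [h0, intervalIntegral.integral_comp_mul_left f two_ne_zero]
  have h2 : ∫ θ in (2*0:ℝ)..(2*(2*Real.pi)), f θ
      = (∫ θ in (0:ℝ)..(2*Real.pi), f θ) + ∫ θ in (2*Real.pi)..(2*(2*Real.pi)), f θ := by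
    rw [show (2*0:ℝ) = 0 by ring]
    exact (intervalIntegral.integral_add_adjacent_intervals (hint _ _) (hint _ _)).symm
  have h3 : ∫ θ in (2*Real.pi)..(2*(2*Real.pi)), f θ = ∫ θ in (0:ℝ)..(2*Real.pi), f θ := by
    have hper := (periodic_logabs a b).intervalIntegral_add_eq (2*Real.pi) 0
    rw [show 2*(2*Real.pi) = 2*Real.pi + 2*Real.pi by ring]
    simpa using hper
  rw [h2, h3, integral_log_abs_add a b ha hba]
  rw [smul_eq_mul]
  ring

end Aux

set_option maxHeartbeats 1600000 in
/-- For a 2×2 real matrix `A` with `det A = 1`,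
`(1/(2π)) ∫₀^{2π} log ‖A·u(θ)‖ dθ = log((‖A‖_op + ‖A‖_op⁻¹)/2)`. -/
theorem average_log_norm_eq_log_opNorm (A : Matrix (Fin 2) (Fin 2) ℝ) (hA : A.det = 1) :
    (1 / (2 * Real.pi)) *
        ∫ θ in (0:ℝ)..(2 * Real.pi), Real.log ‖toE2 (A.mulVec (unitVec θ))‖ =
      Real.log ((opNormR A + (opNormR A)⁻¹) / 2) := by
  have hdet : A 0 0 * A 1 1 - A 0 1 * A 1 0 = 1 := by
    rw [Matrix.det_fin_two] at hA; linarith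
  set p : ℝ := (A 0 0^2 + A 0 1^2 + A 1 0^2 + A 1 1^2)/2 with hp
  set q : ℝ := (A 0 0^2 + A 1 0^2 - A 0 1^2 - A 1 1^2)/2 with hq
  set s : ℝ := A 0 0 * A 0 1 + A 1 0 * A 1 1 with hs
  have hpqs : q^2 + s^2 = p^2 - 1 := by
    rw [hp, hq, hs]
    linear_combination (-(A 0 0 * A 1 1 - A 0 1 * A 1 0) - 1) * hdet
  have hp1 : 1 ≤ p := by
    have hp0 : 0 ≤ p := by rw [hp]; positivity
    nlinarith [sq_nonneg q, sq_nonneg s]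
  set a : ℝ := Real.sqrt ((p+1)/2) with haa
  have ha2 : a^2 = (p+1)/2 := Real.sq_sqrt (by linarith)
  have ha1 : 1 ≤ a := by nlinarith [Real.sqrt_nonneg ((p+1)/2)]
  have ha0 : (0:ℝ) < a := by linarith
  have ha0' : a ≠ 0 := ne_of_gt ha0
  set b : ℂ := ((q/(2*a) : ℝ) : ℂ) + ((-s/(2*a) : ℝ) : ℂ) * Complex.I with hb
  have hbre : b.re = q/(2*a) := by
    rw [hb]
    simp only [Complex.add_re, Complex.ofReal_re, Complex.mul_re, Complex.ofReal_im,
      Complex.I_re, Complex.I_im]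
    ring
  have hbim : b.im = -s/(2*a) := by
    rw [hb]
    simp only [Complex.add_im, Complex.ofReal_im, Complex.mul_im, Complex.ofReal_re,
      Complex.I_re, Complex.I_im]
    ring
  set m : ℝ := Complex.abs b with hm
  have hm0 : 0 ≤ m := Complex.abs.nonneg b
  have hm2 : m^2 = (p-1)/2 := by
    have h1 : m^2 = (q^2 + s^2)/(4*a^2) := by
      rw [hm, Complex.sq_abs, hb, Complex.normSq_add_mul_I]
      ring
    rw [h1, hpqs]
    rw [show 4*a^2 = 2*(p+1) by linear_combination 4*ha2]
    rw [div_eq_div_iff (by positivity) (by norm_num)]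
    ring
  have hma : m < a := by nlinarith
  have hampos : 0 < a + m := by linarith
  -- pointwise norm identity
  have hnorm : ∀ θ : ℝ, ‖toE2 (A.mulVec (unitVec θ))‖
      = Complex.abs ((a:ℂ) + b * Complex.exp ((2*θ : ℝ) * Complex.I)) := by
    intro θ
    set e : ℂ := Complex.exp ((2*θ : ℝ) * Complex.I) with he
    have here : (b*e).re = (q/(2*a)) * Real.cos (2*θ) - (-s/(2*a)) * Real.sin (2*θ) := by
      rw [Complex.mul_re, hbre, hbim, he, Complex.exp_ofReal_mul_I_re, Complex.exp_ofReal_mul_I_im]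
    have hXY : (b*e).re^2 + (b*e).im^2 = m^2 := by
      calc (b*e).re^2 + (b*e).im^2 = Complex.abs (b*e)^2 := by
            rw [Complex.sq_abs, Complex.normSq_apply]; ring
        _ = m^2 := by rw [map_mul, he, Complex.abs_exp]; simp [hm]
    have hkey : Complex.normSq ((a:ℂ) + b * e) = a^2 + m^2 + 2*a*(b*e).re := by
      rw [Complex.normSq_apply]
      simp only [Complex.add_re, Complex.add_im, Complex.ofReal_re, Complex.ofReal_im, zero_add]
      linear_combination hXY
    have h2a : 2*a*(b*e).re = q * Real.cos (2*θ) + s * Real.sin (2*θ) := by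
      rw [here]
      field_simp
      try ring
    have hRHS : Complex.normSq ((a:ℂ) + b * e)
        = p + q * Real.cos (2*θ) + s * Real.sin (2*θ) := by
      rw [hkey, h2a, ha2, hm2]; ring
    have hLHS : (A.mulVec (unitVec θ)) 0 ^2 + (A.mulVec (unitVec θ)) 1 ^2
        = p + q * Real.cos (2*θ) + s * Real.sin (2*θ) := by
      have h1 : Real.sin θ^2 + Real.cos θ^2 = 1 := Real.sin_sq_add_cos_sq _
      have hv0 : (A.mulVec (unitVec θ)) 0 = A 0 0 * Real.cos θ + A 0 1 * Real.sin θ := by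
        simp [Matrix.mulVec, dotProduct, Fin.sum_univ_two, unitVec, Matrix.vecHead, Matrix.vecTail]
      have hv1 : (A.mulVec (unitVec θ)) 1 = A 1 0 * Real.cos θ + A 1 1 * Real.sin θ := by
        simp [Matrix.mulVec, dotProduct, Fin.sum_univ_two, unitVec, Matrix.vecHead, Matrix.vecTail]
      rw [hv0, hv1, Real.cos_two_mul, Real.sin_two_mul, hp, hq, hs]
      linear_combination (A 0 1^2 + A 1 1^2) * h1
    rw [toE2, EuclideanSpace.norm_eq, Complex.abs_apply]
    congr 1
    simp only [WithLp.equiv_symm_apply, WithLp.ofLp_toLp, Fin.sum_univ_two, Real.norm_eq_abs]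
    rw [_root_.sq_abs, _root_.sq_abs, hLHS, hRHS]
  -- the integral
  have hInt : (∫ θ in (0:ℝ)..(2 * Real.pi), Real.log ‖toE2 (A.mulVec (unitVec θ))‖)
      = 2 * Real.pi * Real.log a := by
    rw [show (fun θ => Real.log ‖toE2 (A.mulVec (unitVec θ))‖)
        = fun θ : ℝ => Real.log (Complex.abs ((a:ℂ) + b * Complex.exp ((2*θ : ℝ) * Complex.I)))
      from funext fun θ => by rw [hnorm θ]]
    exact integral_double a b ha0 hma
  -- the operator norm
  have hTapply : ∀ v : Fin 2 → ℝ,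
      (Matrix.toEuclideanCLM (𝕜 := ℝ) A) (toE2 v) = toE2 (A.mulVec v) := by
    intro v
    rw [toE2, toE2]; exact Matrix.toEuclideanCLM_toLp A v
  have hopu : ∀ θ : ℝ, ‖(Matrix.toEuclideanCLM (𝕜 := ℝ) A) (toE2 (unitVec θ))‖
      = Complex.abs ((a:ℂ) + b * Complex.exp ((2*θ : ℝ) * Complex.I)) := by
    intro θ; rw [hTapply, hnorm]
  have hop : opNormR A = a + m := by
    apply le_antisymm
    · apply ContinuousLinearMap.opNorm_le_bound _ (le_of_lt hampos)
      intro x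
      set v : Fin 2 → ℝ := WithLp.equiv 2 (Fin 2 → ℝ) x with hv
      have hxv : toE2 v = x := by rw [toE2, hv]; simp
      set z : ℂ := ((v 0 : ℝ) : ℂ) + ((v 1 : ℝ) : ℂ) * Complex.I with hz
      set r : ℝ := Complex.abs z with hr
      set θ : ℝ := Complex.arg z with hθ
      have hz0 : v 0 = r * Real.cos θ := by
        rw [hr, hθ]
        rw [Complex.abs_mul_cos_arg]
        rw [hz]; simp
      have hz1 : v 1 = r * Real.sin θ := by
        rw [hr, hθ]
        rw [Complex.abs_mul_sin_arg]
        rw [hz]; simp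
      have hvs : v = r • unitVec θ := by
        funext i
        fin_cases i
        · simpa [unitVec] using hz0
        · simpa [unitVec] using hz1
      have hxnorm : ‖x‖ = r := by
        rw [← hxv, toE2, EuclideanSpace.norm_eq]
        simp only [WithLp.equiv_symm_apply, WithLp.ofLp_toLp, Fin.sum_univ_two, Real.norm_eq_abs]
        rw [_root_.sq_abs, _root_.sq_abs, hr, Complex.abs_apply, hz, Complex.normSq_add_mul_I]
      have hr0 : 0 ≤ r := Complex.abs.nonneg z
      have hsm : toE2 (A.mulVec v) = r • toE2 (A.mulVec (unitVec θ)) := by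
        rw [hvs, Matrix.mulVec_smul, toE2, toE2]
        rfl
      rw [← hxv, hTapply, hsm, norm_smul, hxv, hxnorm]
      have hrn : ‖r‖ = r := by rw [Real.norm_eq_abs]; exact abs_of_nonneg hr0
      rw [hrn]
      have hb1 : ‖toE2 (A.mulVec (unitVec θ))‖ ≤ a + m := by
        rw [hnorm θ]
        calc Complex.abs ((a:ℂ) + b * Complex.exp ((2*θ : ℝ) * Complex.I))
            ≤ Complex.abs ((a:ℂ)) + Complex.abs (b * Complex.exp ((2*θ : ℝ) * Complex.I)) :=
              Complex.abs.add_le _ _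
          _ = a + m := by
              rw [map_mul, Complex.abs_exp, Complex.abs_ofReal, abs_of_pos ha0]
              simp [hm]
      calc r * ‖toE2 (A.mulVec (unitVec θ))‖ ≤ r * (a + m) := by
            exact mul_le_mul_of_nonneg_left hb1 hr0
        _ = (a + m) * r := by ring
    · set θ₀ : ℝ := -(Complex.arg b)/2 with hθ₀
      have hbe : b * Complex.exp ((2*θ₀ : ℝ) * Complex.I) = ((m : ℝ) : ℂ) := by
        rw [show (2*θ₀ : ℝ) = -(Complex.arg b) by rw [hθ₀]; ring, Complex.ofReal_neg]
        nth_rewrite 1 [← Complex.abs_mul_exp_arg_mul_I b]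
        rw [mul_assoc, ← Complex.exp_add,
          show ((Complex.arg b : ℝ) : ℂ) * Complex.I + -((Complex.arg b : ℝ) : ℂ) * Complex.I = 0
            by ring,
          Complex.exp_zero, mul_one, ← hm]
      have hub : ‖toE2 (unitVec θ₀)‖ = 1 := by
        rw [toE2, EuclideanSpace.norm_eq]
        simp only [WithLp.equiv_symm_apply, WithLp.ofLp_toLp, Fin.sum_univ_two, Real.norm_eq_abs]
        simp only [unitVec, Matrix.cons_val_zero, Matrix.cons_val_one, Matrix.head_cons, _root_.sq_abs]
        rw [Real.cos_sq_add_sin_sq]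
        exact Real.sqrt_one
      have hle := (Matrix.toEuclideanCLM (𝕜 := ℝ) A).le_opNorm (toE2 (unitVec θ₀))
      rw [hopu θ₀, hub, mul_one, hbe] at hle
      calc a + m = Complex.abs ((a:ℂ) + ((m:ℝ):ℂ)) := by
            rw [show ((a:ℝ):ℂ) + ((m:ℝ):ℂ) = (((a + m : ℝ)):ℂ) by push_cast; ring]
            rw [Complex.abs_ofReal, abs_of_pos hampos]
        _ ≤ opNormR A := hle
  -- final computation
  have hinv : (a + m)⁻¹ = a - m := by
    have hprod : (a + m) * (a - m) = 1 := by nlinarith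
    field_simp at hprod ⊢
    linarith [hprod]
  rw [hInt, hop, hinv]
  rw [show (a + m + (a - m))/2 = a by ring]
  have hπ : (2 * Real.pi) ≠ 0 := by positivity
  field_simp
end

section
/- For every real number α, (1/(2π)) · ∫₀^{2π} log ‖(cos θ + α·sin θ, sin θ)‖ dθ = (1/2) · log(1 + α²/4). In words: the average over the unit circle of log ‖A u‖, for the shear matrix A = [[1, α],[0, 1]], equals (1/2) log(1 + α²/4). -/
open Metric

lemma toE2_norm (x y : ℝ) : ‖toE2 ![x, y]‖ = Real.sqrt (x ^ 2 + y ^ 2) := by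
  simp [toE2, EuclideanSpace.norm_eq, Fin.sum_univ_two, sq_abs]

/-- Mean value property on the unit circle. -/
lemma circle_mean {f : ℂ → ℂ}
    (hc : ContinuousOn f (closedBall 0 1))
    (hd : ∀ z ∈ ball (0:ℂ) 1, DifferentiableAt ℂ f z) :
    (∫ θ in (0:ℝ)..(2 * Real.pi), f (circleMap 0 1 θ)) = 2 * Real.pi * f 0 := by
  have h := Complex.circleIntegral_sub_center_inv_smul_of_differentiable_on_off_countable
    one_pos Set.countable_empty hc (fun z hz => hd z hz.1)
  rw [circleIntegral] at h
  simp only [deriv_circleMap, sub_zero, smul_eq_mul] at h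
  have hne : ∀ θ : ℝ, circleMap 0 1 θ ≠ 0 := fun θ => circleMap_ne_center one_ne_zero
  have heq : ∀ θ : ℝ, circleMap 0 1 θ * Complex.I *
      ((circleMap 0 1 θ)⁻¹ * f (circleMap 0 1 θ)) = Complex.I * f (circleMap 0 1 θ) := by
    intro θ; field_simp [hne θ]
  rw [intervalIntegral.integral_congr (fun θ _ => heq θ),
    intervalIntegral.integral_const_mul] at h
  have : Complex.I * ∫ θ in (0:ℝ)..(2 * Real.pi), f (circleMap 0 1 θ)
      = Complex.I * (2 * Real.pi * f 0) := by rw [h]; ring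
  exact mul_left_cancel₀ Complex.I_ne_zero this

lemma shear_abs (α : ℝ) (θ : ℝ) :
    ‖(1 + Complex.I * (α/2 : ℝ)) - Complex.I * (α/2 : ℝ) *
        (Complex.exp (θ * Complex.I))^2‖
      = Real.sqrt ((Real.cos θ + α * Real.sin θ)^2 + (Real.sin θ)^2) := by
  rw [Complex.norm_def]
  congr 1
  rw [Complex.exp_mul_I, ← Complex.ofReal_cos, ← Complex.ofReal_sin]
  simp only [Complex.normSq_apply, pow_two, Complex.add_re, Complex.add_im, Complex.mul_re,
    Complex.mul_im, Complex.sub_re, Complex.sub_im, Complex.one_re, Complex.one_im,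
    Complex.I_re, Complex.I_im, Complex.ofReal_re, Complex.ofReal_im]
  linear_combination (-(1 + (α/2)^2 * (1 - (Real.sin θ^2 + Real.cos θ^2)))) *
    (Real.sin_sq_add_cos_sq θ)

/-- For every real `α`,
`(1/(2π)) ∫₀^{2π} log ‖(cos θ + α sin θ, sin θ)‖ dθ = (1/2) log(1 + α²/4)`:
the average over the unit circle of `log ‖A u‖` for the shear `A = [[1,α],[0,1]]`. -/
theorem average_log_norm_shear (α : ℝ) :
    (1 / (2 * Real.pi)) *
        ∫ θ in (0:ℝ)..(2 * Real.pi),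
          Real.log ‖toE2 ![Real.cos θ + α * Real.sin θ, Real.sin θ]‖ =
      (1 / 2) * Real.log (1 + α ^ 2 / 4) := by
  have hπ : (0:ℝ) < Real.pi := Real.pi_pos
  set β : ℝ := α / 2 with hβ
  set c : ℂ := 1 + Complex.I * (β : ℝ) with hc
  have hcabs : ‖c‖ = Real.sqrt (1 + β ^ 2) := by
    rw [Complex.norm_def]
    congr 1
    simp [Complex.normSq_apply, hc]
    ring
  have hcabspos : 0 < ‖c‖ := by
    rw [hcabs]
    exact Real.sqrt_pos.2 (by positivity)
  have hcne : c ≠ 0 := by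
    intro h; rw [h] at hcabspos; simp at hcabspos
  set w : ℂ := Complex.I * (β : ℝ) / c with hw
  have hwabs : ‖w‖ < 1 := by
    rw [hw, norm_div, div_lt_one hcabspos]
    rw [hcabs]
    have : ‖Complex.I * (β : ℝ)‖ = |β| := by simp
    rw [this]
    rw [show |β| = Real.sqrt (β^2) by rw [Real.sqrt_sq_eq_abs]]
    exact Real.sqrt_lt_sqrt (sq_nonneg β) (by linarith)
  -- the auxiliary holomorphic function
  set f : ℂ → ℂ := fun z => Complex.log (1 - w * z ^ 2) with hf
  have hmem : ∀ z ∈ closedBall (0:ℂ) 1, 1 - w * z ^ 2 ∈ Complex.slitPlane := by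
    intro z hz
    have hz1 : ‖z‖ ≤ 1 := by simpa [Complex.dist_eq] using hz
    have : ‖-(w * z ^ 2)‖ < 1 := by
      rw [norm_neg]
      calc ‖w * z ^ 2‖ = ‖w‖ * ‖z‖ ^ 2 := by
            simp [norm_mul, norm_pow]
        _ ≤ ‖w‖ * 1 := by
            apply mul_le_mul_of_nonneg_left _ (norm_nonneg w)
            calc ‖z‖ ^ 2 ≤ 1 ^ 2 := by
                  exact pow_le_pow_left₀ (norm_nonneg z) hz1 2
              _ = 1 := one_pow 2
        _ < 1 := by rwa [mul_one]
    simpa [sub_eq_add_neg] using Complex.mem_slitPlane_of_norm_lt_one this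
  have hfc : ContinuousOn f (closedBall 0 1) := by
    intro z hz
    have hin : ContinuousAt (fun z : ℂ => 1 - w * z ^ 2) z := by fun_prop
    have h2 : ContinuousAt f z := by
      simpa [Function.comp_def, hf] using
        ContinuousAt.comp (f := fun z : ℂ => 1 - w * z ^ 2) (_root_.continuousAt_clog (hmem z hz)) hin
    exact h2.continuousWithinAt
  have hfd : ∀ z ∈ ball (0:ℂ) 1, DifferentiableAt ℂ f z := by
    intro z hz
    have hin : DifferentiableAt ℂ (fun z : ℂ => 1 - w * z ^ 2) z := by fun_prop
    have h2 := DifferentiableAt.comp z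
      (Complex.differentiableAt_log (hmem z (ball_subset_closedBall hz))) hin
    simpa [Function.comp_def, hf] using h2
  have hmean := circle_mean hfc hfd
  have hf0 : f 0 = 0 := by simp [hf]
  rw [hf0, mul_zero] at hmean
  -- continuity & integrability of θ ↦ f (circleMap 0 1 θ)
  have hcont : Continuous fun θ : ℝ => f (circleMap 0 1 θ) :=
    hfc.comp_continuous (continuous_circleMap 0 1)
      (fun θ => circleMap_mem_closedBall 0 one_pos.le θ)
  -- pointwise identity
  have hpt : ∀ θ : ℝ,
      Real.log ‖toE2 ![Real.cos θ + α * Real.sin θ, Real.sin θ]‖ =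
        Real.log ‖c‖ + (f (circleMap 0 1 θ)).re := by
    intro θ
    have hcm : circleMap 0 1 θ = Complex.exp (θ * Complex.I) := by
      simp [circleMap]
    have hv : c * (1 - w * (circleMap 0 1 θ) ^ 2)
        = (1 + Complex.I * (β : ℝ)) - Complex.I * (β : ℝ) * (Complex.exp (θ * Complex.I))^2 := by
      have hc' : (1 + Complex.I * ((β : ℝ) : ℂ)) ≠ 0 := hcne
      rw [hcm, hw, hc]
      field_simp
    have hvne : 1 - w * (circleMap 0 1 θ) ^ 2 ≠ 0 :=
      Complex.slitPlane_ne_zero (hmem _ (circleMap_mem_closedBall 0 one_pos.le θ))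
    have habs : ‖toE2 ![Real.cos θ + α * Real.sin θ, Real.sin θ]‖
        = ‖c‖ * ‖1 - w * (circleMap 0 1 θ) ^ 2‖ := by
      rw [toE2_norm, ← shear_abs α θ, ← hβ, ← hv, norm_mul]
    rw [habs, Real.log_mul hcabspos.ne' (norm_ne_zero_iff.2 hvne), hf, Complex.log_re]
  -- rewrite the integral
  have hsplit : (∫ θ in (0:ℝ)..(2 * Real.pi),
      Real.log ‖toE2 ![Real.cos θ + α * Real.sin θ, Real.sin θ]‖)
      = (∫ θ in (0:ℝ)..(2 * Real.pi), Real.log ‖c‖)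
        + ∫ θ in (0:ℝ)..(2 * Real.pi), (f (circleMap 0 1 θ)).re := by
    have hre_cont : Continuous fun θ : ℝ => (f (circleMap 0 1 θ)).re :=
      Complex.continuous_re.comp hcont
    rw [← intervalIntegral.integral_add intervalIntegrable_const
      (hre_cont.intervalIntegrable _ _)]
    exact intervalIntegral.integral_congr fun θ _ => hpt θ
  have hre : (∫ θ in (0:ℝ)..(2 * Real.pi), (f (circleMap 0 1 θ)).re) = 0 := by
    have : (∫ θ in (0:ℝ)..(2 * Real.pi), Complex.reCLM (f (circleMap 0 1 θ)))
        = Complex.reCLM (∫ θ in (0:ℝ)..(2 * Real.pi), f (circleMap 0 1 θ)) :=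
      ContinuousLinearMap.intervalIntegral_comp_comm _ (hcont.intervalIntegrable _ _)
    simpa [hmean] using this
  rw [hsplit, hre, add_zero, intervalIntegral.integral_const, smul_eq_mul, sub_zero]
  rw [hcabs, Real.log_sqrt (by positivity)]
  have : 1 + β ^ 2 = 1 + α ^ 2 / 4 := by rw [hβ]; ring
  rw [this]
  field_simp
end

section
/- For every real ε ≥ 0, (1/(2π)) · ∫₀¹ ∫₀^{2π} log ‖(cos θ + 4πε·x(1−x)·sin θ, sin θ)‖ dθ dx = ∫₀^{1/2} log(1 + (2πε·x(1−x))²) dx. (This identifies the random Lyapunov exponent R(ε) of the SO(3)-randomized twist family with the explicit one-variable integral ∫₀^{1/2} log(1 + (2πε x(1−x))²) dx.) -/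
open Complex Metric intervalIntegral Real Set

/-- Mean value property over the unit circle for functions holomorphic on the closed disc. -/
lemma circle_mean_value (f : ℂ → ℂ)
    (hd : ∀ z ∈ closedBall (0:ℂ) 1, DifferentiableAt ℂ f z) :
    ∫ θ in (0:ℝ)..(2*π), f (Complex.exp (θ * I)) = 2 * π * f 0 := by
  have h := circleIntegral_sub_center_inv_smul_of_differentiable_on_off_countable
    (f := f) (c := 0) (R := 1) one_pos Set.countable_empty
    (fun z hz => (hd z hz).continuousAt.continuousWithinAt)
    (fun z hz => hd z (ball_subset_closedBall hz.1))
  rw [circleIntegral] at h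
  simp only [deriv_circleMap, circleMap_zero, Complex.ofReal_one, one_mul, sub_zero,
    smul_eq_mul] at h
  have h2 : (fun θ : ℝ => Complex.exp (↑θ * I) * I * ((Complex.exp (↑θ * I))⁻¹ * f (Complex.exp (↑θ * I))))
      = fun θ : ℝ => I * f (Complex.exp (↑θ * I)) := by
    funext θ
    field_simp [Complex.exp_ne_zero]
  rw [h2, intervalIntegral.integral_const_mul] at h
  apply mul_left_cancel₀ I_ne_zero
  rw [h]; ring

/-- Jensen-type formula: circle average of `log |a + b e^{iθ}|` is `log |a|` when `|b| < |a|`. -/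
lemma jensen_circle (a b : ℂ) (hab : ‖b‖ < ‖a‖) :
    ∫ θ in (0:ℝ)..(2*π), Real.log (‖a + b * Complex.exp (θ * I)‖)
      = 2 * π * Real.log (‖a‖) := by
  have ha : a ≠ 0 := by
    rintro rfl
    simp only [norm_zero] at hab
    exact (norm_nonneg b).not_gt hab
  set w : ℂ := b / a with hw_def
  have hw : ‖w‖ < 1 := by
    rw [hw_def, norm_div, div_lt_one (norm_pos_iff.mpr ha)]
    exact hab
  set f : ℂ → ℂ := fun z => Complex.log a + Complex.log (1 + w * z) with hf_def
  have hslit : ∀ z ∈ closedBall (0:ℂ) 1, (1 + w * z) ∈ Complex.slitPlane := by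
    intro z hz
    rw [mem_closedBall, dist_zero_right] at hz
    left
    have h1 : ‖w * z‖ < 1 := by
      rw [norm_mul]
      calc ‖w‖ * ‖z‖ ≤ ‖w‖ * 1 :=
            mul_le_mul_of_nonneg_left hz (by positivity)
        _ < 1 := by simpa using hw
    have h2 : |(w * z).re| < 1 := lt_of_le_of_lt (Complex.abs_re_le_norm _) h1
    simp only [Complex.add_re, Complex.one_re]
    have := (abs_lt.mp h2).1
    linarith
  have hd : ∀ z ∈ closedBall (0:ℂ) 1, DifferentiableAt ℂ f z := by
    intro z hz
    apply DifferentiableAt.const_add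
    exact (Complex.differentiableAt_log (hslit z hz)).comp (f := fun z => 1 + w * z) z (by fun_prop)
  have hmv := circle_mean_value f hd
  have hne : ∀ θ : ℝ, (1 + w * Complex.exp (θ * I)) ≠ 0 := by
    intro θ
    exact Complex.slitPlane_ne_zero (hslit _ (by
      rw [mem_closedBall, dist_zero_right]
      simp [Complex.norm_exp]))
  have hre : ∀ θ : ℝ, (f (Complex.exp (θ * I))).re
      = Real.log (‖a + b * Complex.exp (θ * I)‖) := by
    intro θ
    have : a + b * Complex.exp (θ * I) = a * (1 + w * Complex.exp (θ * I)) := by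
      rw [hw_def, mul_add, mul_one, ← mul_assoc, mul_div_cancel₀ b ha]
    rw [hf_def]
    simp only [Complex.add_re, Complex.log_re]
    rw [this, norm_mul, Real.log_mul (norm_pos_iff.mpr ha).ne' (norm_pos_iff.mpr (hne θ)).ne']
  have hint : IntervalIntegrable (fun θ : ℝ => f (Complex.exp (θ * I)))
      MeasureTheory.volume 0 (2*π) := by
    apply Continuous.intervalIntegrable
    have : Continuous fun θ : ℝ => Complex.exp (θ * I) := by fun_prop
    exact continuous_iff_continuousAt.mpr fun θ =>
      ((hd _ (by rw [mem_closedBall, dist_zero_right]; simp [Complex.norm_exp])).continuousAt).comp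
        this.continuousAt
  have := Complex.reCLM.intervalIntegral_comp_comm hint
  rw [hmv] at this
  simp only [Complex.reCLM_apply] at this
  have hf0 : f 0 = Complex.log a := by simp [hf_def]
  calc ∫ θ in (0:ℝ)..(2*π), Real.log (‖a + b * Complex.exp (θ * I)‖)
      = ∫ x in (0:ℝ)..(2*π), (f (Complex.exp (x * I))).re :=
        intervalIntegral.integral_congr fun θ _ => (hre θ).symm
    _ = (2 * ↑π * f 0).re := this
    _ = 2 * π * Real.log (‖a‖) := by
        rw [hf0, show (2*(π:ℂ)) = ((2*π:ℝ):ℂ) by push_cast; ring,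
          Complex.re_ofReal_mul, Complex.log_re]

lemma norm_toE2 (p q : ℝ) : ‖toE2 ![p, q]‖ = Real.sqrt (p^2 + q^2) := by
  rw [toE2, EuclideanSpace.norm_eq]
  simp [Fin.sum_univ_two, sq_abs]

/-- The circle average of the log-norm of the sheared unit vector. -/
lemma inner_integral (α : ℝ) :
    ∫ θ in (0:ℝ)..(2*π), Real.log ‖toE2 ![Real.cos θ + α * Real.sin θ, Real.sin θ]‖
      = π * Real.log (1 + (α/2)^2) := by
  set A : ℂ := 1 + ((α/2 : ℝ) : ℂ) * I with hA_def
  set B : ℂ := -(((α/2 : ℝ) : ℂ) * I) with hB_def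
  have hexp : ∀ t : ℝ, Complex.exp (↑t * I) = ↑(Real.cos t) + ↑(Real.sin t) * I := by
    intro t; rw [Complex.exp_mul_I, Complex.ofReal_cos, Complex.ofReal_sin]
  set g : ℝ → ℝ := fun t => Real.log (‖A + B * Complex.exp (↑t * I)‖) with hg_def
  have hAabs : ‖A‖ = Real.sqrt (1 + (α/2)^2) := by
    rw [hA_def, Complex.norm_def, Complex.normSq_apply]
    simp only [Complex.add_re, Complex.add_im, Complex.one_re, Complex.one_im, Complex.mul_re,
      Complex.mul_im, Complex.I_re, Complex.I_im, Complex.ofReal_re, Complex.ofReal_im]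
    congr 1; ring
  have hBabs : ‖B‖ = |α/2| := by
    rw [hB_def, norm_neg, norm_mul, Complex.norm_I, Complex.norm_real, Real.norm_eq_abs, mul_one]
  have hAB : ‖B‖ < ‖A‖ := by
    rw [hAabs, hBabs, ← Real.sqrt_sq_eq_abs]
    apply Real.sqrt_lt_sqrt (sq_nonneg _)
    nlinarith [_root_.sq_abs (α/2)]
  have habs : ∀ θ : ℝ, Real.log ‖toE2 ![Real.cos θ + α * Real.sin θ, Real.sin θ]‖ = g (2*θ) := by
    intro θ
    rw [norm_toE2, hg_def]
    congr 1
    rw [Complex.norm_def, Complex.normSq_apply]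
    simp only [hexp (2*θ), hA_def, hB_def, Complex.add_re, Complex.add_im, Complex.mul_re,
      Complex.mul_im, Complex.one_re, Complex.one_im, Complex.I_re, Complex.I_im,
      Complex.ofReal_re, Complex.ofReal_im, Complex.neg_re, Complex.neg_im]
    rw [Real.sin_two_mul, Real.cos_two_mul]
    congr 1
    have h := Real.sin_sq_add_cos_sq θ
    linear_combination ((1:ℝ) + α^2*(1 - Real.cos θ^2)) * h
  rw [intervalIntegral.integral_congr (g := fun θ => g (2*θ)) (fun θ _ => habs θ)]
  have hper : Function.Periodic g (2*π) := by
    intro t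
    rw [hg_def]
    simp only
    congr 3
    push_cast
    rw [add_mul, Complex.exp_add, Complex.exp_two_pi_mul_I, mul_one]
  have hne : ∀ t : ℝ, A + B * Complex.exp (↑t * I) ≠ 0 := by
    intro t h0
    have h1 : ‖A‖ = ‖B‖ := by
      have hA : A = -(B * Complex.exp (↑t * I)) := by linear_combination h0
      rw [hA, norm_neg, norm_mul, Complex.norm_exp]
      simp
    exact hAB.ne' h1
  have hcont : Continuous g := by
    apply continuous_iff_continuousAt.mpr
    intro t
    exact ContinuousAt.log
      ((continuous_norm.comp (by fun_prop)).continuousAt)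
      (norm_ne_zero_iff.mpr (hne t))
  have hsplit : ∫ t in (0:ℝ)..(4*π), g t = 2 * ∫ t in (0:ℝ)..(2*π), g t := by
    have h1 : ∫ t in (2*π)..(4*π), g t = ∫ t in (0:ℝ)..(2*π), g t := by
      have h2 := hper.intervalIntegral_add_eq (2*π) 0
      rw [zero_add] at h2
      rw [show (4:ℝ)*π = 2*π + 2*π by ring, h2]
    rw [← intervalIntegral.integral_add_adjacent_intervals
      (hcont.intervalIntegrable 0 (2*π)) (hcont.intervalIntegrable (2*π) (4*π)), h1]
    ring
  have hcomp : ∫ θ in (0:ℝ)..(2*π), g (2*θ) = (2:ℝ)⁻¹ • ∫ t in (0:ℝ)..(4*π), g t := by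
    rw [intervalIntegral.integral_comp_mul_left g (two_ne_zero),
      show (2:ℝ)*(2*π) = 4*π by ring, show (2:ℝ)*0 = 0 by ring]
  rw [hcomp, hsplit, jensen_circle A B hAB, smul_eq_mul, hAabs,
    Real.log_sqrt (by positivity)]
  ring

/-- For every `ε ≥ 0`,
`(1/(2π)) ∫₀¹ ∫₀^{2π} log ‖(cos θ + 4πε x(1-x) sin θ, sin θ)‖ dθ dx
  = ∫₀^{1/2} log(1 + (2πε x(1-x))²) dx`,
identifying the random Lyapunov exponent `R(ε)` of the `SO(3)`-randomized twist family
with an explicit one-variable integral. -/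
theorem random_exponent_integral_formula (ε : ℝ) (hε : 0 ≤ ε) :
    (1 / (2 * Real.pi)) *
        ∫ x in (0:ℝ)..1, ∫ θ in (0:ℝ)..(2 * Real.pi),
          Real.log ‖toE2 ![Real.cos θ + 4 * Real.pi * ε * x * (1 - x) * Real.sin θ,
            Real.sin θ]‖ =
      ∫ x in (0:ℝ)..(1/2), Real.log (1 + (2 * Real.pi * ε * x * (1 - x)) ^ 2) := by
  have hinner : ∀ x : ℝ, (∫ θ in (0:ℝ)..(2 * Real.pi),
      Real.log ‖toE2 ![Real.cos θ + 4 * Real.pi * ε * x * (1 - x) * Real.sin θ, Real.sin θ]‖)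
      = π * Real.log (1 + (2 * Real.pi * ε * x * (1 - x)) ^ 2) := by
    intro x
    rw [inner_integral (4 * Real.pi * ε * x * (1 - x)),
      show ((4 * Real.pi * ε * x * (1 - x))/2)^2 = (2 * Real.pi * ε * x * (1 - x))^2 by ring]
  rw [intervalIntegral.integral_congr
    (g := fun x => π * Real.log (1 + (2 * Real.pi * ε * x * (1 - x)) ^ 2))
    (fun x _ => hinner x)]
  rw [intervalIntegral.integral_const_mul]
  set h : ℝ → ℝ := fun x => Real.log (1 + (2 * Real.pi * ε * x * (1 - x)) ^ 2) with hh
  have hconth : Continuous h := Continuous.log (by fun_prop) (fun x => by positivity)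
  have hsym : ∫ x in (1/2 : ℝ)..1, h x = ∫ x in (0:ℝ)..(1/2), h x := by
    have h1 := intervalIntegral.integral_comp_sub_left (a := 0) (b := 1/2) h 1
    rw [show (1:ℝ) - 1/2 = 1/2 by norm_num, sub_zero] at h1
    rw [← h1]
    apply intervalIntegral.integral_congr
    intro x _
    simp only [hh]
    congr 2
    ring
  have hsplitx : ∫ x in (0:ℝ)..1, h x = 2 * ∫ x in (0:ℝ)..(1/2), h x := by
    rw [← intervalIntegral.integral_add_adjacent_intervals
      (hconth.intervalIntegrable 0 (1/2)) (hconth.intervalIntegrable (1/2) 1), hsym]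
    ring
  rw [hsplitx]
  have hπ : Real.pi ≠ 0 := Real.pi_ne_zero
  field_simp
end
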